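/- Let 0 ≤ b < 1 and 0 < c ≤ 1, and let K₀ = [[√((1+b)(1+c)/(2(1+bc))), 0],[0, √((1−b)(1+c)/(2(1−bc)))]] be the leading standard Kraus operator of the extremal qubit channel N_{b,c}. Let ψ = vec(K₀)/‖vec(K₀)‖ ∈ ℂ²⊗ℂ² be its normalized vectorization (the unique optimal input state of N_{b,c}). Then the reduced density matrix Tr_2(ψψ†) has eigenvalues (1+b)(1−bc)/(2(1−b²c)) and (1−b)(1+bc)/(2(1−b²c)); hence the entanglement of the optimal input is h((1+b)(1−bc)/(2(1−b²c))), where h(x) = −x log₂ x − (1−x) log₂(1−x). -/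

import Mathlib

open Matrix

/-- Vectorization of a 2×2 matrix: `vec(K) = Σ_{j,k} K_{kj} e_j ⊗ e_k`. -/
def vec2 (K : Matrix (Fin 2) (Fin 2) ℂ) : Fin 2 × Fin 2 → ℂ := fun q => K q.2 q.1

/-- Partial trace over the second tensor factor:
`(Tr₂ σ)_{j,j'} = Σ_k σ_{(j,k),(j',k)}`. -/
noncomputable def ptrace2 (σ : Matrix (Fin 2 × Fin 2) (Fin 2 × Fin 2) ℂ) :
    Matrix (Fin 2) (Fin 2) ℂ :=
  Matrix.of fun j j' => ∑ k, σ (j, k) (j', k)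

/-- The binary entropy `h(x) = −x log₂ x − (1−x) log₂ (1−x)`. -/
noncomputable def binH (x : ℝ) : ℝ :=
  -(x * Real.logb 2 x) - (1 - x) * Real.logb 2 (1 - x)

/-!
`K₀` is diagonal with real entries `√a, √d`, so its normalized vectorization is already in
Schmidt form: the reduced state is `diag(a, d) / (a + d)`, and `a / (a + d)` simplifies to
`(1 + b)(1 − bc) / (2(1 − b²c))`. The eigenvalues of a `2 × 2` Hermitian matrix are pinned
down, up to order, by its trace and determinant.
-/

lemma ptrace2_vecMulVec_vec2 (K : Matrix (Fin 2) (Fin 2) ℂ) :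
    ptrace2 (vecMulVec (vec2 K) (star (vec2 K))) = (Kᴴ * K)ᵀ := by
  ext j j'
  simp [ptrace2, vecMulVec, vec2, mul_apply, mul_comm]

lemma vec2_smul (s : ℂ) (K : Matrix (Fin 2) (Fin 2) ℂ) : vec2 (s • K) = s • vec2 K := rfl

lemma sum_normSq_vec2_diagonal (p : Fin 2 → ℝ) :
    ∑ q, Complex.normSq (vec2 (diagonal fun i => (p i : ℂ)) q) = ∑ i, p i ^ 2 := by
  simp [vec2, Fintype.sum_prod_type, Fin.sum_univ_two, sq]

lemma ptrace2_normalized_vec2_diagonal (p : Fin 2 → ℝ) (ψ : Fin 2 × Fin 2 → ℂ)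
    (hψ : ψ = ((√(∑ i, p i ^ 2) : ℝ) : ℂ)⁻¹ • vec2 (diagonal fun i => (p i : ℂ))) :
    ptrace2 (vecMulVec ψ (star ψ)) = diagonal fun i => ((p i ^ 2 / ∑ j, p j ^ 2 : ℝ) : ℂ) := by
  have hS : 0 ≤ ∑ j, p j ^ 2 := by positivity
  rw [hψ, ← vec2_smul, ptrace2_vecMulVec_vec2, ← Complex.ofReal_inv, ← diagonal_smul,
    diagonal_conjTranspose, diagonal_mul_diagonal, diagonal_transpose]
  congr 1
  ext i
  simp only [Pi.star_apply, Pi.smul_apply, smul_eq_mul, star_mul', Complex.star_def,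
    Complex.conj_ofReal]
  norm_cast
  have hinv : (√(∑ j, p j ^ 2))⁻¹ ^ 2 = (∑ j, p j ^ 2)⁻¹ := by rw [inv_pow, Real.sq_sqrt hS]
  linear_combination p i ^ 2 * hinv

lemma Matrix.IsHermitian.eigenvalues_fin_two_eq_of_trace_det {𝕜 : Type*} [RCLike 𝕜]
    {A : Matrix (Fin 2) (Fin 2) 𝕜} (hA : A.IsHermitian) {x y : ℝ}
    (htr : A.trace = x + y) (hdet : A.det = x * y) :
    (hA.eigenvalues 0 = x ∧ hA.eigenvalues 1 = y) ∨
      (hA.eigenvalues 0 = y ∧ hA.eigenvalues 1 = x) := by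
  have hsum : hA.eigenvalues 0 + hA.eigenvalues 1 = x + y := by
    have h := hA.trace_eq_sum_eigenvalues
    rw [htr, Fin.sum_univ_two] at h
    exact_mod_cast h.symm
  have hprod : hA.eigenvalues 0 * hA.eigenvalues 1 = x * y := by
    have h := hA.det_eq_prod_eigenvalues
    rw [hdet, Fin.prod_univ_two] at h
    exact_mod_cast h.symm
  have hroot : (hA.eigenvalues 0 - x) * (hA.eigenvalues 0 - y) = 0 := by
    linear_combination hA.eigenvalues 0 * hsum - hprod
  rcases mul_eq_zero.mp hroot with h | h
  · left; constructor <;> linarith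
  · right; constructor <;> linarith

lemma neg_sum_mul_logb_eq_binH {f : Fin 2 → ℝ} {x : ℝ}
    (hf : (f 0 = x ∧ f 1 = 1 - x) ∨ (f 0 = 1 - x ∧ f 1 = x)) :
    -∑ i, f i * Real.logb 2 (f i) = binH x := by
  rcases hf with ⟨h0, h1⟩ | ⟨h0, h1⟩ <;> rw [Fin.sum_univ_two, h0, h1, binH] <;> ring

lemma kraus_weight_div_sum {b c : ℝ} (h₁ : 1 + b * c ≠ 0) (h₂ : 1 - b * c ≠ 0)
    (h₃ : 1 - b ^ 2 * c ≠ 0) (hc : 1 + c ≠ 0) :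
    (1 + b) * (1 + c) / (2 * (1 + b * c)) /
        ((1 + b) * (1 + c) / (2 * (1 + b * c)) + (1 - b) * (1 + c) / (2 * (1 - b * c))) =
      (1 + b) * (1 - b * c) / (2 * (1 - b ^ 2 * c)) := by
  have hsum : (1 + b) * (1 + c) / (2 * (1 + b * c)) + (1 - b) * (1 + c) / (2 * (1 - b * c)) =
      (1 + c) * (1 - b ^ 2 * c) / ((1 + b * c) * (1 - b * c)) := by
    field_simp
    ring
  rw [hsum]
  field_simp

theorem stmt_9 (b c : ℝ) (hb0 : 0 ≤ b) (hb1 : b < 1) (hc0 : 0 < c) (hc1 : c ≤ 1)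
    (K₀ : Matrix (Fin 2) (Fin 2) ℂ)
    (hK₀ : K₀ = !![(Real.sqrt ((1 + b) * (1 + c) / (2 * (1 + b * c))) : ℂ), 0;
                   0, (Real.sqrt ((1 - b) * (1 + c) / (2 * (1 - b * c))) : ℂ)])
    (ψ : Fin 2 × Fin 2 → ℂ)
    (hψ : ψ = ((Real.sqrt (∑ q, Complex.normSq (vec2 K₀ q)) : ℝ) : ℂ)⁻¹ • vec2 K₀) :
    ∃ hH : (ptrace2 (Matrix.vecMulVec ψ (star ψ))).IsHermitian,
      ((hH.eigenvalues 0 = (1 + b) * (1 - b * c) / (2 * (1 - b ^ 2 * c)) ∧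
        hH.eigenvalues 1 = (1 - b) * (1 + b * c) / (2 * (1 - b ^ 2 * c))) ∨
       (hH.eigenvalues 0 = (1 - b) * (1 + b * c) / (2 * (1 - b ^ 2 * c)) ∧
        hH.eigenvalues 1 = (1 + b) * (1 - b * c) / (2 * (1 - b ^ 2 * c)))) ∧
      (-∑ i, hH.eigenvalues i * Real.logb 2 (hH.eigenvalues i))
        = binH ((1 + b) * (1 - b * c) / (2 * (1 - b ^ 2 * c))) := by
  have hbc : b * c < 1 := lt_of_le_of_lt (by nlinarith) hb1
  have hb2c : b ^ 2 * c < 1 := by nlinarith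
  set a := (1 + b) * (1 + c) / (2 * (1 + b * c))
  set d := (1 - b) * (1 + c) / (2 * (1 - b * c))
  set r := (1 + b) * (1 - b * c) / (2 * (1 - b ^ 2 * c))
  have ha : 0 < a := by positivity
  have hd : 0 ≤ d := div_nonneg (by nlinarith) (by linarith)
  have hK : K₀ = diagonal fun i => ((![√a, √d] i : ℝ) : ℂ) := by
    rw [hK₀]; ext i j; fin_cases i <;> fin_cases j <;> simp
  rw [hK, sum_normSq_vec2_diagonal] at hψ
  have hr : a / (a + d) = r := kraus_weight_div_sum (by positivity) (by linarith) (by linarith)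
    (by positivity)
  have hdr : d / (a + d) = 1 - r := by
    rw [← hr, eq_sub_iff_add_eq, ← add_div, add_comm, div_self (by positivity)]
  have hr' : 1 - r = (1 - b) * (1 + b * c) / (2 * (1 - b ^ 2 * c)) := by
    rw [eq_div_iff (by nlinarith), sub_mul, div_mul_cancel₀ _ (by nlinarith)]
    ring
  have hρ : ptrace2 (vecMulVec ψ (star ψ)) = diagonal fun i => ((![r, 1 - r] i : ℝ) : ℂ) := by
    rw [ptrace2_normalized_vec2_diagonal _ ψ hψ]
    congr 1; ext i; fin_cases i
    · simp [Real.sq_sqrt ha.le, Real.sq_sqrt hd, hr]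
    · simp [Real.sq_sqrt ha.le, Real.sq_sqrt hd, hdr]
  have hH : (ptrace2 (vecMulVec ψ (star ψ))).IsHermitian :=
    hρ ▸ isHermitian_diagonal_of_self_adjoint _ (funext fun i => Complex.conj_ofReal _)
  have hev := hH.eigenvalues_fin_two_eq_of_trace_det (x := r) (y := 1 - r)
    (by simp [hρ]) (by simp [hρ])
  exact ⟨hH, hr' ▸ hev, neg_sum_mul_logb_eq_binH hev⟩
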